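/- Let P₁, P₂ be pastures with distinguished elements ε₁, ε₂, let f : P₁ → P₂ be a pasture morphism, and let h : P₁× → P₂× be a group homomorphism such that h(ε₁) = 1 and h(x) = 1 for every fundamental element x ∈ FE(P₁). Then the map g : P₁ → P₂ defined by g(0) = 0 and g(x) = f(x)·h(x) for x ∈ P₁× is again a pasture morphism. (Hence the set of pasture morphisms P₁ → P₂ is a union of cosets of the group of characters of P₁× trivial on the subgroup generated by FE(P₁) and ε₁.) -/

import Mathlib

/-- A *pasture*: a commutative monoid with absorbing zero whose nonzero elements form an
abelian group (i.e. a `CommGroupWithZero`), together with a nullset `null ⊆ P³` satisfying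
(P1) `(1,0,0) ∉ null`, (P2) there is a unique `e` with `(1,e,0) ∈ null`, and (P3) `null` is
closed under the action of `S₃ × P` (encoded via the two generating transpositions together
with simultaneous scaling). -/
structure Pasture where
  carrier : Type*
  [str : CommGroupWithZero carrier]
  null : Set (carrier × carrier × carrier)
  one_zero_zero_not_mem : ((1 : carrier), (0 : carrier), (0 : carrier)) ∉ null
  epsilon_existsUnique : ∃! e : carrier, ((1 : carrier), e, (0 : carrier)) ∈ null
  swap_left_mem : ∀ {a b c : carrier}, (a, b, c) ∈ null → (b, a, c) ∈ null
  swap_right_mem : ∀ {a b c : carrier}, (a, b, c) ∈ null → (a, c, b) ∈ null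
  scale_mem : ∀ {a b c : carrier} (p : carrier), (a, b, c) ∈ null → (a * p, b * p, c * p) ∈ null

attribute [instance] Pasture.str


/-- The distinguished element `ε` of a pasture. -/
noncomputable def Pasture.eps (P : Pasture) : P.carrier := P.epsilon_existsUnique.choose

/-- The set of fundamental pairs of a pasture: pairs `(x, y)` of nonzero elements with
`(x, y, ε) ∈ N_P`. -/
def Pasture.FP (P : Pasture) : Set (P.carrier × P.carrier) :=
  {p | p.1 ≠ 0 ∧ p.2 ≠ 0 ∧ (p.1, p.2, P.eps) ∈ P.null}

/-- The set of fundamental elements of a pasture. -/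
def Pasture.FE (P : Pasture) : Set P.carrier := {x | ∃ y, (x, y) ∈ P.FP}

/-- A pasture morphism: a map of sets with `f 0 = 0`, whose restriction to the unit groups
is a group homomorphism, and which maps the nullset into the nullset. -/
def IsPastureMorphism (P₁ P₂ : Pasture) (f : P₁.carrier → P₂.carrier) : Prop :=
  f 0 = 0 ∧ (∀ x : P₁.carrier, x ≠ 0 → f x ≠ 0) ∧
    (∀ x y : P₁.carrier, x ≠ 0 → y ≠ 0 → f (x * y) = f x * f y) ∧
    ∀ a b c : P₁.carrier, (a, b, c) ∈ P₁.null → (f a, f b, f c) ∈ P₂.null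


/-!
Any two nonzero entries `a, b` of a null triple `(a, b, c)` of `P₁` have the same value under
`h`: if `c = 0` then `b = a ε`, and otherwise scaling by `c⁻¹ ε` turns `a` and `b` into
fundamental elements. So on the entries of a null triple (rotated so that its first entry is
nonzero) the twist `g` agrees with `f` followed by multiplication by one constant, and
nullsets are closed under scaling.
-/

namespace Pasture

variable (P : Pasture)

lemma eps_mem : ((1 : P.carrier), P.eps, (0 : P.carrier)) ∈ P.null :=
  P.epsilon_existsUnique.choose_spec.1

lemma eps_ne_zero : P.eps ≠ 0 := fun h0 => P.one_zero_zero_not_mem (h0 ▸ P.eps_mem)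

lemma zero_mem_null : ((0 : P.carrier), 0, 0) ∈ P.null := by
  simpa using P.scale_mem 0 P.eps_mem

variable {P}

lemma rotate_mem {a b c : P.carrier} (hn : (a, b, c) ∈ P.null) : (b, c, a) ∈ P.null :=
  P.swap_right_mem (P.swap_left_mem hn)

lemma eq_mul_eps_of_mem_null {a b : P.carrier} (ha : a ≠ 0)
    (hn : (a, b, (0 : P.carrier)) ∈ P.null) : b = a * P.eps := by
  have hscaled := P.scale_mem a⁻¹ hn
  rw [mul_inv_cancel₀ ha, zero_mul] at hscaled
  have hb : b * a⁻¹ = P.eps := P.epsilon_existsUnique.unique hscaled P.eps_mem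
  rw [← hb, mul_comm b, mul_inv_cancel_left₀ ha]

lemma mul_inv_mul_eps_mem_FP {a b c : P.carrier} (ha : a ≠ 0) (hb : b ≠ 0) (hc : c ≠ 0)
    (hn : (a, b, c) ∈ P.null) : (a * (c⁻¹ * P.eps), b * (c⁻¹ * P.eps)) ∈ P.FP := by
  have hscale : c⁻¹ * P.eps ≠ 0 := mul_ne_zero (inv_ne_zero hc) P.eps_ne_zero
  refine ⟨mul_ne_zero ha hscale, mul_ne_zero hb hscale, ?_⟩
  simpa only [mul_inv_cancel_left₀ hc] using P.scale_mem (c⁻¹ * P.eps) hn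

end Pasture

section Twist

variable {P₁ P₂ : Pasture} {f h g : P₁.carrier → P₂.carrier}

lemma eq_of_mem_null_of_eq_one_on_FE
    (hunits : ∀ x : P₁.carrier, x ≠ 0 → h x ≠ 0)
    (hmul : ∀ x y : P₁.carrier, x ≠ 0 → y ≠ 0 → h (x * y) = h x * h y)
    (heps : h P₁.eps = 1) (hFE : ∀ x ∈ P₁.FE, h x = 1)
    {a b c : P₁.carrier} (ha : a ≠ 0) (hb : b ≠ 0) (hn : (a, b, c) ∈ P₁.null) :
    h a = h b := by
  by_cases hc : c = 0
  · subst hc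
    rw [P₁.eq_mul_eps_of_mem_null ha hn, hmul a _ ha P₁.eps_ne_zero, heps, mul_one]
  · have hscale : c⁻¹ * P₁.eps ≠ 0 := mul_ne_zero (inv_ne_zero hc) P₁.eps_ne_zero
    have hfund := P₁.mul_inv_mul_eps_mem_FP ha hb hc hn
    have hfa := hFE _ ⟨_, hfund⟩
    have hfb := hFE _ ⟨_, hfund.2.1, hfund.1, P₁.swap_left_mem hfund.2.2⟩
    rw [hmul _ _ ha hscale] at hfa
    rw [hmul _ _ hb hscale] at hfb
    exact mul_right_cancel₀ (hunits _ hscale) (hfa.trans hfb.symm)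

lemma twist_eq_mul_of_eq (hf0 : f 0 = 0) (hg0 : g 0 = 0)
    (hg : ∀ x : P₁.carrier, x ≠ 0 → g x = f x * h x)
    {x : P₁.carrier} {t : P₂.carrier} (hx : x ≠ 0 → h x = t) : g x = f x * t := by
  by_cases hx0 : x = 0
  · rw [hx0, hg0, hf0, zero_mul]
  · rw [hg x hx0, hx hx0]

lemma twist_mem_null_of_ne_zero (hf : IsPastureMorphism P₁ P₂ f)
    (hunits : ∀ x : P₁.carrier, x ≠ 0 → h x ≠ 0)
    (hmul : ∀ x y : P₁.carrier, x ≠ 0 → y ≠ 0 → h (x * y) = h x * h y)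
    (heps : h P₁.eps = 1) (hFE : ∀ x ∈ P₁.FE, h x = 1)
    (hg0 : g 0 = 0) (hg : ∀ x : P₁.carrier, x ≠ 0 → g x = f x * h x)
    {a b c : P₁.carrier} (ha : a ≠ 0) (hn : (a, b, c) ∈ P₁.null) :
    (g a, g b, g c) ∈ P₂.null := by
  have hb : b ≠ 0 → h b = h a := fun hb =>
    (eq_of_mem_null_of_eq_one_on_FE hunits hmul heps hFE ha hb hn).symm
  have hc : c ≠ 0 → h c = h a := fun hc =>
    (eq_of_mem_null_of_eq_one_on_FE hunits hmul heps hFE ha hc (P₁.swap_right_mem hn)).symm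
  rw [twist_eq_mul_of_eq hf.1 hg0 hg (fun _ => rfl), twist_eq_mul_of_eq hf.1 hg0 hg hb,
    twist_eq_mul_of_eq hf.1 hg0 hg hc]
  exact P₂.scale_mem (h a) (hf.2.2.2 a b c hn)

end Twist

/-- Twisting a pasture morphism `f : P₁ → P₂` by a character `h` of `P₁^×` which is trivial
on `ε₁` and on all fundamental elements of `P₁` yields again a pasture morphism: the map `g`
with `g 0 = 0` and `g x = f x · h x` for `x ∈ P₁^×` is a pasture morphism. -/
theorem twist_by_character_isPastureMorphism (P₁ P₂ : Pasture)
    (f : P₁.carrier → P₂.carrier) (hf : IsPastureMorphism P₁ P₂ f)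
    (h : P₁.carrier → P₂.carrier)
    (hunits : ∀ x : P₁.carrier, x ≠ 0 → h x ≠ 0)
    (hmul : ∀ x y : P₁.carrier, x ≠ 0 → y ≠ 0 → h (x * y) = h x * h y)
    (heps : h P₁.eps = 1)
    (hFE : ∀ x ∈ P₁.FE, h x = 1)
    (g : P₁.carrier → P₂.carrier) (hg0 : g 0 = 0)
    (hg : ∀ x : P₁.carrier, x ≠ 0 → g x = f x * h x) :
    IsPastureMorphism P₁ P₂ g := by
  have hnull : ∀ {a b c}, a ≠ 0 → (a, b, c) ∈ P₁.null → (g a, g b, g c) ∈ P₂.null :=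
    twist_mem_null_of_ne_zero hf hunits hmul heps hFE hg0 hg
  obtain ⟨-, hfne, hfmul, -⟩ := hf
  refine ⟨hg0, fun x hx => ?_, fun x y hx hy => ?_, fun a b c hn => ?_⟩
  · rw [hg x hx]
    exact mul_ne_zero (hfne x hx) (hunits x hx)
  · rw [hg _ (mul_ne_zero hx hy), hg x hx, hg y hy, hfmul x y hx hy, hmul x y hx hy,
      mul_mul_mul_comm]
  · by_cases ha : a = 0
    · by_cases hb : b = 0
      · by_cases hc : c = 0
        · simpa only [ha, hb, hc, hg0] using P₂.zero_mem_null
        · exact P₂.rotate_mem (hnull hc (P₁.rotate_mem (P₁.rotate_mem hn)))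
      · exact P₂.rotate_mem (P₂.rotate_mem (hnull hb (P₁.rotate_mem hn)))
    · exact hnull ha hn
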